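/- Let k ≥ 2 and let Θ_i : E_i → E_{i+1} (i = 1, …, k) be contractions between complex Hilbert spaces, Θ := Θ_k ⋯ Θ_1. Fix integers 0 = j_0 < j_1 < ⋯ < j_r = k and for m = 1, …, r set Θ_{J_m} := Θ_{j_m} ⋯ Θ_{j_{m-1}+1}. Then the factorization Θ = Θ_k ⋯ Θ_1 is k-regular if and only if the aggregated factorization Θ = Θ_{J_r} ⋯ Θ_{J_1} is r-regular and, for every m = 1, …, r, the factorization Θ_{J_m} = Θ_{j_m} ⋯ Θ_{j_{m-1}+1} is (j_m − j_{m-1})-regular. -/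

import Mathlib

noncomputable section
open ContinuousLinearMap

section Defect
variable {H K : Type*} [NormedAddCommGroup H] [InnerProductSpace ℂ H] [CompleteSpace H]
  [NormedAddCommGroup K] [InnerProductSpace ℂ K] [CompleteSpace K]

/-- The defect operator `Δ_A := (I - A*A)^{1/2}` of a contraction `A : H → K`. -/
noncomputable def defect (A : H →L[ℂ] K) : H →L[ℂ] H :=
  CFC.sqrt (1 - (ContinuousLinearMap.adjoint A).comp A)

/-- Closure of the range of an operator, as a submodule. -/
noncomputable def clRan (A : H →L[ℂ] K) : Submodule ℂ K :=
  (LinearMap.range (A : H →ₗ[ℂ] K)).topologicalClosure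

theorem defect_mem_clRan (A : H →L[ℂ] K) (x : H) : defect A x ∈ clRan (defect A) :=
  Submodule.le_topologicalClosure _ (LinearMap.mem_range_self (defect A : H →ₗ[ℂ] H) x)

instance clRan_completeSpace (A : H →L[ℂ] K) : CompleteSpace (clRan A) :=
  (Submodule.isClosed_topologicalClosure _).isComplete.completeSpace_coe
end Defect
section Chain
variable {E : ℕ → Type*} [∀ n, NormedAddCommGroup (E n)] [∀ n, InnerProductSpace ℂ (E n)]
  [∀ n, CompleteSpace (E n)]

/-- Transport along an equality of indices. -/
def castCLM {a b : ℕ} (h : a = b) : E a →L[ℂ] E b := by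
  subst h; exact ContinuousLinearMap.id ℂ (E a)

/-- `segProd Θ a m = Θ_{a+m} ∘ ⋯ ∘ Θ_{a+1} : E a → E (a+m)` (in `1`-based notation):
the composition of `m` successive operators of the chain starting at index `a`. -/
noncomputable def segProd (Θ : ∀ n, E n →L[ℂ] E (n + 1)) (a : ℕ) :
    ∀ m : ℕ, E a →L[ℂ] E (a + m)
  | 0 => ContinuousLinearMap.id ℂ (E a)
  | m + 1 => (Θ (a + m)).comp (segProd Θ a m)

/-- `chainProd Θ a b : E a → E b` is the composition of the operators of the chain
leading from `E a` to `E b` (for `a ≤ b`; junk value `0` otherwise). -/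
noncomputable def chainProd (Θ : ∀ n, E n →L[ℂ] E (n + 1)) (a b : ℕ) : E a →L[ℂ] E b :=
  if h : a ≤ b then (castCLM (Nat.add_sub_cancel' h)).comp (segProd Θ a (b - a)) else 0

/-- The tuple `(Δ_k Θ_{k-1}⋯Θ_1 f, …, Δ_2 Θ_1 f, Δ_1 f)` (component `i : Fin k`
corresponds to the `(i+1)`-st factor, in `1`-based notation) in the Hilbert (ℓ²)
direct sum of the closures of the ranges of the defect operators of the factors. -/
noncomputable def regTuple (Θ : ∀ n, E n →L[ℂ] E (n + 1)) (k : ℕ) (f : E 0) :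
    PiLp 2 (fun i : Fin k => clRan (defect (Θ (i : ℕ)))) :=
  WithLp.toLp 2 (fun i => ⟨defect (Θ (i : ℕ)) (chainProd Θ 0 (i : ℕ) f), defect_mem_clRan _ _⟩)

/-- `k`-regularity of the factorization `Θ_k ⋯ Θ_1`: the set
`{Δ_k Θ_{k-1}⋯Θ_1 f ⊕ ⋯ ⊕ Δ_2 Θ_1 f ⊕ Δ_1 f : f ∈ E_1}` is dense in the Hilbert
direct sum `(cl ran Δ_k) ⊕ ⋯ ⊕ (cl ran Δ_1)`. -/
def IsRegularFact (Θ : ∀ n, E n →L[ℂ] E (n + 1)) (k : ℕ) : Prop :=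
  DenseRange (regTuple Θ k)

end Chain

/-!
For a chain of contractions, `‖regTuple Θ n f‖ = ‖Δ_{Θ_n ⋯ Θ_1} f‖`: this is the isometry `Z_n`,
obtained by telescoping `‖Δ_A x‖² = ‖x‖² - ‖A x‖²`.

Grouping the `k` coordinates of the direct sum into the blocks `[j_m, j_{m+1})` is a surjective
isometry, and it sends the `k`-tuple of `f` to the family of block tuples `W_m (f_m)`, where
`f_m := Θ_{j_m} ⋯ Θ_1 f` and `W_m` is the tuple map of the `m`-th sub-factorization. The
aggregated `r`-tuple of `f` is the family `D_m (f_m)`, with `D_m` the defect of `Θ_{J_m}`. By `Z`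
for the sub-factorizations, `W_m` and `D_m` are isometric to each other, and `D_m` has dense
range in `cl ran Δ_{J_m}`. Hence the family `W_m (f_m)` is dense iff the family `D_m (f_m)` is
dense and every `W_m` has dense range.
-/

section Defect
variable {H K : Type*} [NormedAddCommGroup H] [InnerProductSpace ℂ H]
  [NormedAddCommGroup K] [InnerProductSpace ℂ K]

theorem denseRange_clRan (A : H →L[ℂ] K) :
    DenseRange fun x =>
      (⟨A x, Submodule.le_topologicalClosure _ (LinearMap.mem_range_self _ x)⟩ : clRan A) := by
  rw [DenseRange, Subtype.dense_iff, ← Set.range_comp]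
  exact (Submodule.topologicalClosure_coe _).le

variable [CompleteSpace H] [CompleteSpace K]

theorem one_sub_adjoint_comp_self_nonneg {A : H →L[ℂ] K} (hA : ‖A‖ ≤ 1) :
    0 ≤ 1 - adjoint A ∘L A := by
  have hpos : 0 ≤ adjoint A ∘L A := (nonneg_iff_isPositive _).mpr (isPositive_adjoint_comp_self A)
  rw [sub_nonneg, ← CStarAlgebra.norm_le_one_iff_of_nonneg _ hpos, norm_adjoint_comp_self]
  nlinarith [norm_nonneg A]

theorem norm_defect_apply_sq {A : H →L[ℂ] K} (hA : ‖A‖ ≤ 1) (x : H) :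
    ‖defect A x‖ ^ 2 = ‖x‖ ^ 2 - ‖A x‖ ^ 2 := by
  have hsq : defect A (defect A x) = x - adjoint A (A x) :=
    congr($(CFC.sqrt_mul_sqrt_self _ (one_sub_adjoint_comp_self_nonneg hA)) x)
  have hpos : (defect A).IsPositive :=
    (nonneg_iff_isPositive _).mp (CFC.sqrt_nonneg (1 - adjoint A ∘L A))
  have hinner : inner ℂ (defect A x) (defect A x) = inner ℂ x x - inner ℂ (A x) (A x) := by
    rw [hpos.inner_left_eq_inner_right, hsq, inner_sub_right, adjoint_inner_right]
  rw [norm_sq_eq_re_inner (𝕜 := ℂ), norm_sq_eq_re_inner (𝕜 := ℂ), norm_sq_eq_re_inner (𝕜 := ℂ),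
    hinner, map_sub]

end Defect

section ChainProd
variable {E : ℕ → Type*} [∀ n, NormedAddCommGroup (E n)] [∀ n, InnerProductSpace ℂ (E n)]
  (Θ : ∀ n, E n →L[ℂ] E (n + 1))

theorem castCLM_surjective {a b : ℕ} (h : a = b) : Function.Surjective (castCLM (E := E) h) := by
  subst h
  exact fun v => ⟨v, rfl⟩

theorem chainProd_castCLM {a a' b : ℕ} (h : a = a') (v : E a) :
    chainProd Θ a' b (castCLM h v) = chainProd Θ a b v := by
  subst h
  rfl

theorem castCLM_comp_segProd {a b m m' : ℕ} (hm : m = m') (h : a + m = b) (h' : a + m' = b) :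
    castCLM (E := E) h ∘L segProd Θ a m = castCLM h' ∘L segProd Θ a m' := by
  subst hm
  rfl

theorem chainProd_self (a : ℕ) : chainProd Θ a a = ContinuousLinearMap.id ℂ (E a) := by
  rw [chainProd, dif_pos le_rfl, castCLM_comp_segProd Θ (Nat.sub_self a) _ (Nat.add_zero a)]
  rfl

theorem chainProd_succ {a b : ℕ} (h : a ≤ b) :
    chainProd Θ a (b + 1) = Θ b ∘L chainProd Θ a b := by
  obtain ⟨c, rfl⟩ := Nat.exists_eq_add_of_le h
  rw [chainProd, dif_pos (by omega), chainProd, dif_pos h,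
    castCLM_comp_segProd Θ (show a + c + 1 - a = c + 1 by omega) _ (Nat.add_assoc a c 1).symm,
    castCLM_comp_segProd Θ (show a + c - a = c by omega) _ rfl]
  rfl

theorem chainProd_comp_chainProd {a b c : ℕ} (hab : a ≤ b) (hbc : b ≤ c) :
    chainProd Θ b c ∘L chainProd Θ a b = chainProd Θ a c := by
  induction c, hbc using Nat.le_induction with
  | base => rw [chainProd_self]; rfl
  | succ c hbc ih => rw [chainProd_succ Θ hbc, chainProd_succ Θ (hab.trans hbc), ← ih]; rfl

theorem chainProd_shift (a t : ℕ) :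
    chainProd (fun s => Θ (a + s)) 0 t = chainProd Θ a (a + t) := by
  induction t with
  | zero => exact (chainProd_self _ 0).trans (chainProd_self Θ a).symm
  | succ t ih =>
    rw [chainProd_succ _ (Nat.zero_le t), ih]
    exact (chainProd_succ Θ (Nat.le_add_right a t)).symm

theorem norm_chainProd_le_one {n : ℕ} (hΘ : ∀ i < n, ‖Θ i‖ ≤ 1) : ‖chainProd Θ 0 n‖ ≤ 1 := by
  induction n with
  | zero => rw [chainProd_self]; exact norm_id_le
  | succ n ih =>
    rw [chainProd_succ Θ (Nat.zero_le n)]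
    refine (opNorm_comp_le _ _).trans (mul_le_one₀ (hΘ n n.lt_succ_self) (norm_nonneg _) ?_)
    exact ih fun i hi => hΘ i (hi.trans n.lt_succ_self)

theorem chainProd_aggregate {r : ℕ} {j : ℕ → ℕ} (hj : MonotoneOn j (Set.Iic r)) {m : ℕ}
    (hm : m ≤ r) :
    chainProd (E := fun m => E (j m)) (fun m => chainProd Θ (j m) (j (m + 1))) 0 m
      = chainProd Θ (j 0) (j m) := by
  induction m with
  | zero => rw [chainProd_self, chainProd_self]
  | succ m ih =>
    have hm' : m ≤ r := m.le_succ.trans hm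
    rw [chainProd_succ _ (Nat.zero_le m), ih hm', chainProd_comp_chainProd Θ
      (hj (Set.mem_Iic.2 (Nat.zero_le r)) (Set.mem_Iic.2 hm') (Nat.zero_le m))
      (hj (Set.mem_Iic.2 hm') (Set.mem_Iic.2 hm) m.le_succ)]

end ChainProd

section DefectTuple
variable {E : ℕ → Type*} [∀ n, NormedAddCommGroup (E n)] [∀ n, InnerProductSpace ℂ (E n)]
  [∀ n, CompleteSpace (E n)] (Θ : ∀ n, E n →L[ℂ] E (n + 1))

theorem sum_norm_defect_chainProd_sq {n : ℕ} (hΘ : ∀ i < n, ‖Θ i‖ ≤ 1) (f : E 0) :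
    ∑ i ∈ Finset.range n, ‖defect (Θ i) (chainProd Θ 0 i f)‖ ^ 2
      = ‖f‖ ^ 2 - ‖chainProd Θ 0 n f‖ ^ 2 := by
  induction n with
  | zero => simp [chainProd_self]
  | succ n ih =>
    rw [Finset.sum_range_succ, ih (fun i hi => hΘ i (hi.trans n.lt_succ_self)),
      norm_defect_apply_sq (hΘ n n.lt_succ_self), chainProd_succ Θ (Nat.zero_le n), comp_apply]
    ring

theorem regTuple_sub (n : ℕ) (f g : E 0) :
    regTuple Θ n f - regTuple Θ n g = regTuple Θ n (f - g) := by
  ext i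
  simp [regTuple]

theorem norm_regTuple {n : ℕ} (hΘ : ∀ i < n, ‖Θ i‖ ≤ 1) (f : E 0) :
    ‖regTuple Θ n f‖ = ‖defect (chainProd Θ 0 n) f‖ := by
  have hsq : ‖regTuple Θ n f‖ ^ 2 = ‖defect (chainProd Θ 0 n) f‖ ^ 2 := by
    rw [PiLp.norm_sq_eq_of_L2, norm_defect_apply_sq (norm_chainProd_le_one Θ hΘ),
      ← sum_norm_defect_chainProd_sq Θ hΘ,
      ← Fin.sum_univ_eq_sum_range (fun i => ‖defect (Θ i) (chainProd Θ 0 i f)‖ ^ 2)]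
    rfl
  exact (sq_eq_sq₀ (norm_nonneg _) (norm_nonneg _)).mp hsq

theorem dist_regTuple {n : ℕ} (hΘ : ∀ i < n, ‖Θ i‖ ≤ 1) (f g : E 0) :
    dist (regTuple Θ n f) (regTuple Θ n g)
      = dist (defect (chainProd Θ 0 n) f) (defect (chainProd Θ 0 n) g) := by
  rw [dist_eq_norm, dist_eq_norm, regTuple_sub, ← map_sub, norm_regTuple Θ hΘ]

end DefectTuple

section DenseRange

theorem DenseRange.comp_of_dist_eq {α β X Y : Type*} [PseudoMetricSpace X] [PseudoMetricSpace Y]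
    {Φ : β → X} {Ψ : β → Y} {P : α → β} (hΦP : DenseRange (Φ ∘ P))
    (hd : ∀ a b, dist (Φ a) (Φ b) = dist (Ψ a) (Ψ b)) (hΨ : DenseRange Ψ) :
    DenseRange (Ψ ∘ P) := by
  refine Metric.denseRange_iff.mpr fun y ε hε => ?_
  obtain ⟨b, hb⟩ := Metric.denseRange_iff.mp hΨ y (ε / 2) (half_pos hε)
  obtain ⟨a, ha⟩ := Metric.denseRange_iff.mp hΦP (Φ b) (ε / 2) (half_pos hε)
  refine ⟨a, ?_⟩
  calc dist y (Ψ (P a)) ≤ dist y (Ψ b) + dist (Ψ b) (Ψ (P a)) := dist_triangle _ _ _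
    _ < ε / 2 + ε / 2 := by rw [← hd]; exact add_lt_add hb ha
    _ = ε := add_halves ε

theorem denseRange_comp_iff_of_dist_eq {α β X Y : Type*} [PseudoMetricSpace X]
    [PseudoMetricSpace Y] {Φ : β → X} {Ψ : β → Y}
    (hd : ∀ a b, dist (Φ a) (Φ b) = dist (Ψ a) (Ψ b)) (hΨ : DenseRange Ψ) (P : α → β) :
    DenseRange (Φ ∘ P) ↔ DenseRange (Ψ ∘ P) ∧ DenseRange Φ :=
  ⟨fun h => ⟨h.comp_of_dist_eq hd hΨ, h.mono (Set.range_comp_subset_range P Φ)⟩,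
    fun ⟨h, hΦ⟩ => h.comp_of_dist_eq (fun a b => (hd a b).symm) hΦ⟩

theorem PiLp.denseRange_toLp_piMap_iff {ι : Type*} {X Y : ι → Type*} [∀ i, Nonempty (X i)]
    [∀ i, TopologicalSpace (Y i)] (p : ENNReal) (f : ∀ i, X i → Y i) :
    DenseRange (fun x : ∀ i, X i => WithLp.toLp p fun i => f i (x i)) ↔ ∀ i, DenseRange (f i) := by
  constructor
  · intro h i
    have : ∀ i, Nonempty (Y i) := fun i => Nonempty.map (f i) inferInstance
    have hev : DenseRange fun z : PiLp p Y => z i :=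
      ((Function.surjective_eval i).comp (PiLp.homeomorph p Y).surjective).denseRange
    exact (hev.comp h (PiLp.continuous_apply p Y i)).mono (Set.range_comp_subset_range _ (f i))
  · intro h
    exact (PiLp.homeomorph p Y).symm.surjective.denseRange.comp (DenseRange.piMap h)
      (PiLp.homeomorph p Y).symm.continuous

theorem PiLp.dist_toLp_piMap_eq {ι : Type*} [Fintype ι] {X Y Z : ι → Type*}
    [∀ i, SeminormedAddCommGroup (Y i)] [∀ i, SeminormedAddCommGroup (Z i)]
    (f : ∀ i, X i → Y i) (g : ∀ i, X i → Z i)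
    (h : ∀ i x y, dist (f i x) (f i y) = dist (g i x) (g i y)) (a b : ∀ i, X i) :
    dist (WithLp.toLp 2 fun i => f i (a i)) (WithLp.toLp 2 fun i => f i (b i))
      = dist (WithLp.toLp 2 fun i => g i (a i)) (WithLp.toLp 2 fun i => g i (b i)) := by
  simp only [PiLp.dist_eq_of_L2, h]

end DenseRange

section Regroup
variable {ι κ : Type*} {τ : κ → Type*} {V : ι → Type*}

def PiLp.regroup (e : (Σ m, τ m) → ι) (x : PiLp 2 V) :
    PiLp 2 fun m => PiLp 2 fun t : τ m => V (e ⟨m, t⟩) :=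
  WithLp.toLp 2 fun m => WithLp.toLp 2 fun t => x (e ⟨m, t⟩)

theorem PiLp.regroup_surjective {e : (Σ m, τ m) → ι} (he : e.Bijective) :
    Function.Surjective (regroup (V := V) e) := by
  intro z
  refine ⟨WithLp.toLp 2 (Equiv.piCongrLeft V (Equiv.ofBijective e he) fun s => z s.1 s.2), ?_⟩
  ext m t
  exact Equiv.piCongrLeft_apply_apply V (Equiv.ofBijective e he) (fun s => z s.1 s.2) ⟨m, t⟩

variable [Fintype ι] [Fintype κ] [∀ m, Fintype (τ m)] [∀ i, SeminormedAddCommGroup (V i)]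

theorem PiLp.dist_regroup {e : (Σ m, τ m) → ι} (he : e.Bijective) (x y : PiLp 2 V) :
    dist (regroup e x) (regroup e y) = dist x y := by
  have hsq : dist (regroup e x) (regroup e y) ^ 2 = dist x y ^ 2 := by
    simp only [PiLp.dist_sq_eq_of_L2]
    rw [← he.sum_comp, Fintype.sum_sigma]
    rfl
  exact (sq_eq_sq₀ dist_nonneg dist_nonneg).mp hsq

theorem PiLp.denseRange_regroup_comp_iff {α : Type*} {e : (Σ m, τ m) → ι} (he : e.Bijective)
    (T : α → PiLp 2 V) : DenseRange (regroup e ∘ T) ↔ DenseRange T := by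
  rw [denseRange_comp_iff_of_dist_eq (Ψ := id) (PiLp.dist_regroup he) denseRange_id,
    Function.id_comp, and_iff_left (PiLp.regroup_surjective he).denseRange]

end Regroup

section Partition
variable {k r : ℕ} {j : ℕ → ℕ}

def blockIndex (hj : StrictMonoOn j (Set.Iic r)) (hjr : j r = k) :
    (Σ m : Fin r, Fin (j (m + 1) - j m)) → Fin k :=
  fun s => ⟨j s.1 + s.2, by
    have hle : j (s.1 + 1) ≤ j r :=
      hj.monotoneOn (Set.mem_Iic.2 s.1.isLt) (Set.mem_Iic.2 le_rfl) s.1.isLt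
    have := s.2.isLt
    omega⟩

theorem blockIndex_injective (hj : StrictMonoOn j (Set.Iic r)) (hjr : j r = k) :
    Function.Injective (blockIndex hj hjr) := by
  have hlt : ∀ (m m' : Fin r) (t : Fin (j (m + 1) - j m)), m < m' → j m + t < j m' := by
    intro m m' t hmm'
    have : j (m + 1) ≤ j m' := hj.monotoneOn (Set.mem_Iic.2 m.isLt) (Set.mem_Iic.2 m'.isLt.le) hmm'
    have := t.isLt
    omega
  rintro ⟨m, t⟩ ⟨m', t'⟩ h
  have hval : j m + t = j m' + t' := congrArg Fin.val h
  obtain rfl : m = m' := by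
    rcases lt_trichotomy m m' with hmm' | hmm' | hmm'
    · have := hlt m m' t hmm'; omega
    · exact hmm'
    · have := hlt m' m t' hmm'; omega
  obtain rfl : t = t' := Fin.ext (by omega)
  rfl

theorem blockIndex_bijective (hj : StrictMonoOn j (Set.Iic r)) (hj0 : j 0 = 0) (hjr : j r = k) :
    (blockIndex hj hjr).Bijective := by
  refine (Fintype.bijective_iff_injective_and_card _).mpr ⟨blockIndex_injective hj hjr, ?_⟩
  have htelescope : ∀ n ≤ r, ∑ m ∈ Finset.range n, (j (m + 1) - j m) = j n := by
    intro n hn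
    induction n with
    | zero => simp [hj0]
    | succ n ih =>
      have hn' : n ≤ r := n.le_succ.trans hn
      have : j n ≤ j (n + 1) := hj.monotoneOn (Set.mem_Iic.2 hn') (Set.mem_Iic.2 hn) n.le_succ
      rw [Finset.sum_range_succ, ih hn']
      omega
  simp only [Fintype.card_sigma, Fintype.card_fin]
  rw [Fin.sum_univ_eq_sum_range (fun m => j (m + 1) - j m), htelescope r le_rfl, hjr]

end Partition

section Factorization
variable {E : ℕ → Type*} [∀ n, NormedAddCommGroup (E n)] [∀ n, InnerProductSpace ℂ (E n)]
  [∀ n, CompleteSpace (E n)] (Θ : ∀ n, E n →L[ℂ] E (n + 1))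

theorem dist_regTuple_shift {a b : ℕ} (hab : a ≤ b) (hΘ : ∀ i ∈ Set.Ico a b, ‖Θ i‖ ≤ 1)
    (g h : E a) :
    dist (regTuple (fun t => Θ (a + t)) (b - a) g) (regTuple (fun t => Θ (a + t)) (b - a) h)
      = dist (defect (chainProd Θ a b) g) (defect (chainProd Θ a b) h) := by
  rw [dist_regTuple _ (fun i hi => hΘ (a + i) ⟨Nat.le_add_right a i, by omega⟩), chainProd_shift,
    Nat.add_sub_cancel' hab]

theorem regTuple_aggregate {r : ℕ} {j : ℕ → ℕ} (hj : MonotoneOn j (Set.Iic r)) (hj0 : j 0 = 0)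
    (f : E 0) :
    regTuple (E := fun m => E (j m)) (fun m => chainProd Θ (j m) (j (m + 1))) r
        (castCLM hj0.symm f)
      = WithLp.toLp 2 fun m : Fin r => (⟨defect (chainProd Θ (j m) (j (m + 1)))
          (chainProd Θ 0 (j m) f), defect_mem_clRan _ _⟩ : clRan _) := by
  ext m : 2
  simp only [regTuple, chainProd_aggregate Θ hj m.isLt.le, chainProd_castCLM]

theorem regroup_regTuple {k r : ℕ} {j : ℕ → ℕ} (hj : StrictMonoOn j (Set.Iic r)) (hjr : j r = k)
    (f : E 0) :
    PiLp.regroup (blockIndex hj hjr) (regTuple Θ k f) = WithLp.toLp 2 fun m : Fin r =>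
      regTuple (fun t => Θ (j m + t)) (j (m + 1) - j m) (chainProd Θ 0 (j m) f) := by
  ext m t : 3
  show defect (Θ (j m + t)) (chainProd Θ 0 (j m + t) f)
    = defect (Θ (j m + t)) (chainProd (fun s => Θ (j m + s)) 0 t (chainProd Θ 0 (j m) f))
  rw [chainProd_shift, ← chainProd_comp_chainProd Θ (Nat.zero_le _) (Nat.le_add_right _ _)]
  rfl

end Factorization

theorem isRegularFact_iff_partition_general {E : ℕ → Type*}
    [∀ n, NormedAddCommGroup (E n)] [∀ n, InnerProductSpace ℂ (E n)] [∀ n, CompleteSpace (E n)]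
    (k : ℕ) (Θ : ∀ n, E n →L[ℂ] E (n + 1)) (hΘ : ∀ i < k, ‖Θ i‖ ≤ 1)
    (r : ℕ) (j : ℕ → ℕ) (hj0 : j 0 = 0) (hjr : j r = k)
    (hmono : ∀ m < r, j m < j (m + 1)) :
    IsRegularFact Θ k ↔
      (IsRegularFact (E := fun m => E (j m)) (fun m => chainProd Θ (j m) (j (m + 1))) r ∧
        ∀ m < r, IsRegularFact (E := fun t => E (j m + t)) (fun t => Θ (j m + t))
          (j (m + 1) - j m)) := by
  have hj : StrictMonoOn j (Set.Iic r) := strictMonoOn_Iic_of_lt_succ hmono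
  let P : E 0 → ∀ m : Fin r, E (j m) := fun f m => chainProd Θ 0 (j m) f
  let W (m : Fin r) := regTuple (fun t => Θ (j m + t)) (j (m + 1) - j m)
  let D (m : Fin r) (x : E (j m)) : clRan (defect (chainProd Θ (j m) (j (m + 1)))) :=
    ⟨defect _ x, defect_mem_clRan _ _⟩
  let Φ (a : ∀ m : Fin r, E (j m)) := WithLp.toLp 2 fun m => W m (a m)
  let Ψ (a : ∀ m : Fin r, E (j m)) := WithLp.toLp 2 fun m => D m (a m)
  have hwin : ∀ m : Fin r, ∀ i ∈ Set.Ico (j m) (j (m + 1)), ‖Θ i‖ ≤ 1 := fun m i hi =>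
    hΘ i (hi.2.trans_le (hjr ▸ hj.monotoneOn (Set.mem_Iic.2 m.isLt) (Set.mem_Iic.2 le_rfl) m.isLt))
  have hd : ∀ a b, dist (Φ a) (Φ b) = dist (Ψ a) (Ψ b) :=
    PiLp.dist_toLp_piMap_eq W D fun m => dist_regTuple_shift Θ (hmono m m.isLt).le (hwin m)
  have hΦ : DenseRange Φ ↔ ∀ m, DenseRange (W m) := PiLp.denseRange_toLp_piMap_iff 2 W
  have hΨ : DenseRange Ψ :=
    (PiLp.denseRange_toLp_piMap_iff 2 D).mpr fun m => denseRange_clRan _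
  have hT : PiLp.regroup (blockIndex hj hjr) ∘ regTuple Θ k = Φ ∘ P :=
    funext (regroup_regTuple Θ hj hjr)
  have hA : regTuple (E := fun m => E (j m)) (fun m => chainProd Θ (j m) (j (m + 1))) r
      ∘ castCLM hj0.symm = Ψ ∘ P := funext (regTuple_aggregate Θ hj.monotoneOn hj0)
  calc IsRegularFact Θ k ↔ DenseRange (Φ ∘ P) := by
        rw [IsRegularFact, ← PiLp.denseRange_regroup_comp_iff (blockIndex_bijective hj hj0 hjr), hT]
        exact Iff.rfl
    _ ↔ DenseRange (Ψ ∘ P) ∧ DenseRange Φ := denseRange_comp_iff_of_dist_eq hd hΨ P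
    _ ↔ _ := by
        rw [← hA, DenseRange, (castCLM_surjective _).range_comp, hΦ, Fin.forall_iff]
        rfl

/-- For a chain of contractions `Θ_i : E_i → E_{i+1}` (`0`-based here),
`Θ := Θ_k ⋯ Θ_1`, and a partition `0 = j_0 < j_1 < ⋯ < j_r = k`: the factorization
`Θ = Θ_k ⋯ Θ_1` is `k`-regular iff the aggregated factorization `Θ = Θ_{J_r} ⋯ Θ_{J_1}`
is `r`-regular and each sub-factorization `Θ_{J_m} = Θ_{j_m} ⋯ Θ_{j_{m-1}+1}` is
`(j_m - j_{m-1})`-regular. -/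
theorem isRegularFact_iff_partition {E : ℕ → Type*}
    [∀ n, NormedAddCommGroup (E n)] [∀ n, InnerProductSpace ℂ (E n)] [∀ n, CompleteSpace (E n)]
    (k : ℕ) (hk : 2 ≤ k) (Θ : ∀ n, E n →L[ℂ] E (n + 1)) (hΘ : ∀ i < k, ‖Θ i‖ ≤ 1)
    (r : ℕ) (hr : 1 ≤ r) (j : ℕ → ℕ) (hj0 : j 0 = 0) (hjr : j r = k)
    (hmono : ∀ m < r, j m < j (m + 1)) :
    IsRegularFact Θ k ↔
      (IsRegularFact (E := fun m => E (j m)) (fun m => chainProd Θ (j m) (j (m + 1))) r ∧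
        ∀ m < r, IsRegularFact (E := fun t => E (j m + t)) (fun t => Θ (j m + t))
          (j (m + 1) - j m)) :=
  isRegularFact_iff_partition_general k Θ hΘ r j hj0 hjr hmono

end
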